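/- arXiv:2305.01699 — 8 statements merged into one kernel-verified Lean document; each statement's English description precedes it below -/
import Mathlib

section
/- For every dimension d ≥ 1, X_d^T X_d = ((d+1)/d) · I_d, where I_d is the d × d identity matrix. -/
open Matrix

/-- The recursively defined matrix `X_d ∈ ℝ^{(d+1)×d}` whose rows are the vertices of a
regular simplex inscribed in the unit sphere of `ℝ^d`:  `X_1 = (-1; 1)`, and for `d > 1`,
the top-left `d × (d-1)` block of `X_d` is `R_d • X_{d-1}` with `R_d = √(d²-1)/d`, the last
column has its first `d` entries equal to `-1/d` and last entry `1`, and the last row is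
`(0, …, 0, 1)`. -/
noncomputable def simplexPts : (d : ℕ) → Matrix (Fin (d + 1)) (Fin d) ℝ
  | 0 => fun _ j => j.elim0
  | 1 => fun i _ => if (i : ℕ) = 0 then -1 else 1
  | (d + 2) => fun i j =>
      if hj : (j : ℕ) < d + 1 then
        if hi : (i : ℕ) < d + 2 then
          (Real.sqrt (((d : ℝ) + 2) ^ 2 - 1) / ((d : ℝ) + 2)) *
            simplexPts (d + 1) ⟨i, hi⟩ ⟨j, hj⟩
        else 0
      else if (i : ℕ) < d + 2 then -1 / ((d : ℝ) + 2) else 1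

/-!
`X_{d+1}` arises from `X_d` by one block step `X ↦ [r • X, -a • 𝟙; 0, 1]`, whose Gram matrix has
blocks `r² XᵀX`, `-r a Xᵀ𝟙` and `m a² + 1`. The columns of every `X_d` sum to zero (the step
preserves this because `m a = 1`), so the off-diagonal blocks vanish, and `R_d` is chosen exactly
so that `R_{d+1}² (d+1)/d = (d+2)/(d+1) = (d+1)(1/(d+1))² + 1`.
-/

open Matrix

section simplexExtend

variable {m n : ℕ} {r a : ℝ} {X : Matrix (Fin m) (Fin n) ℝ}

/-- The block matrix `[r • X, -a • 𝟙; 0, 1]`, where `𝟙` is the all-ones column. -/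
noncomputable def simplexExtend (r a : ℝ) (X : Matrix (Fin m) (Fin n) ℝ) :
    Matrix (Fin (m + 1)) (Fin (n + 1)) ℝ :=
  of fun i j =>
    Fin.lastCases (Fin.lastCases 1 (fun _ => 0) j)
      (fun i => Fin.lastCases (-a) (fun j => r * X i j) j) i

@[simp] lemma simplexExtend_castSucc_castSucc (i : Fin m) (j : Fin n) :
    simplexExtend r a X i.castSucc j.castSucc = r * X i j := by
  simp [simplexExtend]

@[simp] lemma simplexExtend_castSucc_last (i : Fin m) :
    simplexExtend r a X i.castSucc (Fin.last n) = -a := by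
  simp [simplexExtend]

@[simp] lemma simplexExtend_last_castSucc (j : Fin n) :
    simplexExtend r a X (Fin.last m) j.castSucc = 0 := by
  simp [simplexExtend]

@[simp] lemma simplexExtend_last_last :
    simplexExtend r a X (Fin.last m) (Fin.last n) = 1 := by
  simp [simplexExtend]

lemma sum_simplexExtend_col (ha : m * a = 1) (hX : ∀ j, ∑ i, X i j = 0) (j : Fin (n + 1)) :
    ∑ i, simplexExtend r a X i j = 0 := by
  induction j using Fin.lastCases with
  | last => simp [Fin.sum_univ_castSucc, ← ha]
  | cast j => simp [Fin.sum_univ_castSucc, ← Finset.mul_sum, hX j]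

/-- The off-diagonal blocks of the Gram matrix are multiples of the column sums of `X`. -/
lemma simplexExtend_transpose_mul_self {c : ℝ} (hX : Xᵀ * X = c • 1)
    (hsum : ∀ j, ∑ i, X i j = 0) (hc : r ^ 2 * c = m * a ^ 2 + 1) :
    (simplexExtend r a X)ᵀ * simplexExtend r a X = (r ^ 2 * c) • 1 := by
  ext j k
  induction j using Fin.lastCases <;> induction k using Fin.lastCases
  · simp [mul_apply, Fin.sum_univ_castSucc]
    linear_combination -hc
  · simp [mul_apply, Fin.sum_univ_castSucc, ← Finset.mul_sum, hsum,
      (Fin.castSucc_ne_last _).symm]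
  · simp [mul_apply, Fin.sum_univ_castSucc, ← Finset.sum_mul, ← Finset.mul_sum, hsum]
  · rename_i j k
    have hjk : ∑ i, X i j * X i k = c * (1 : Matrix (Fin n) (Fin n) ℝ) j k := by
      simpa [mul_apply] using congr_fun₂ hX j k
    simp only [mul_apply, Fin.sum_univ_castSucc, transpose_apply, simplexExtend_castSucc_castSucc,
      simplexExtend_last_castSucc, mul_zero, add_zero, Matrix.smul_apply, smul_eq_mul]
    simp_rw [mul_mul_mul_comm, ← Finset.mul_sum, hjk, one_apply, Fin.castSucc_inj]
    ring

end simplexExtend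

/-- At `d = 0` this reads `X_1 = simplexExtend 0 1 X_0`, with `X_0` the empty `1 × 0` matrix. -/
lemma simplexPts_succ (d : ℕ) :
    simplexPts (d + 1) =
      simplexExtend (√(((d + 1 : ℕ) : ℝ) ^ 2 - 1) / ((d + 1 : ℕ) : ℝ)) (1 / ((d + 1 : ℕ) : ℝ))
        (simplexPts d) := by
  ext i j
  rcases d with _ | d
  · obtain rfl : j = Fin.last 0 := Subsingleton.elim (α := Fin 1) _ _
    induction i using Fin.lastCases with
    | last => rw [simplexExtend_last_last]; rfl
    | cast i => rw [simplexExtend_castSucc_last, Subsingleton.elim i 0]; simp [simplexPts]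
  · induction i using Fin.lastCases <;> induction j using Fin.lastCases <;>
      simp [simplexPts, neg_div, Nat.lt_succ_iff, Fin.is_le, add_assoc, one_add_one_eq_two]

lemma sum_simplexPts_col (d : ℕ) (j : Fin d) : ∑ i, simplexPts d i j = 0 := by
  induction d with
  | zero => exact j.elim0
  | succ d ih =>
    rw [simplexPts_succ]
    exact sum_simplexExtend_col (by field_simp) ih j

lemma simplexPts_scale_sq_mul (d : ℕ) :
    (√(((d + 2 : ℕ) : ℝ) ^ 2 - 1) / ((d + 2 : ℕ) : ℝ)) ^ 2 *
        ((((d + 1 : ℕ) : ℝ) + 1) / ((d + 1 : ℕ) : ℝ)) =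
      (((d + 2 : ℕ) : ℝ) + 1) / ((d + 2 : ℕ) : ℝ) := by
  push_cast
  rw [div_pow, Real.sq_sqrt (by nlinarith [(Nat.cast_nonneg d : (0 : ℝ) ≤ d)])]
  field_simp
  ring

/-- for every `d ≥ 1`, `X_dᵀ X_d = ((d+1)/d) I_d`. -/
theorem simplexPts_transpose_mul_self (d : ℕ) :
    (simplexPts d)ᵀ * simplexPts d =
      (((d : ℝ) + 1) / (d : ℝ)) • (1 : Matrix (Fin d) (Fin d) ℝ) := by
  match d with
  | 0 => exact Subsingleton.elim _ _
  | 1 =>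
    ext i j
    fin_cases i; fin_cases j
    simp only [mul_apply, transpose_apply]
    simp [simplexPts]
  | d + 2 =>
    rw [simplexPts_succ, ← simplexPts_scale_sq_mul]
    refine simplexExtend_transpose_mul_self (simplexPts_transpose_mul_self (d + 1))
      (sum_simplexPts_col (d + 1)) ?_
    rw [simplexPts_scale_sq_mul]
    field_simp
    ring
end

section
/- For every dimension d ≥ 1, X_d X_d^T = ((d+1)/d) · I_{d+1} − (1/d) · 𝟙_{d+1} 𝟙_{d+1}^T ∈ ℝ^{(d+1)×(d+1)}, where 𝟙_{d+1} is the all-ones vector. -/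
/-!
Write `R = √(d² - 1) / d` for the scale factor, so that `R² + (1/d)² = 1`. Splitting off the last
row and column of `X_d`, the Gram matrix `X_d X_dᵀ` has top-left block `R² X_{d-1} X_{d-1}ᵀ + 1/d²`,
remaining off-diagonal entries `-1/d` and corner entry `1`. By induction the rows of `X_{d-1}` are
unit vectors with pairwise inner products `-1/(d-1)`, and `R² · (-1/(d-1)) + 1/d² = -1/d`.
-/

open Matrix

namespace simplexPts

variable (n : ℕ)

theorem succ_succ_castSucc_castSucc (i : Fin (n + 2)) (j : Fin (n + 1)) :
    simplexPts (n + 2) i.castSucc j.castSucc =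
      Real.sqrt (((n : ℝ) + 2) ^ 2 - 1) / ((n : ℝ) + 2) * simplexPts (n + 1) i j := by
  simp [simplexPts, Fin.is_le]

theorem succ_succ_castSucc_last (i : Fin (n + 2)) :
    simplexPts (n + 2) i.castSucc (Fin.last _) = -1 / ((n : ℝ) + 2) := by
  simp [simplexPts]

theorem succ_succ_last_castSucc (j : Fin (n + 1)) :
    simplexPts (n + 2) (Fin.last _) j.castSucc = 0 := by
  simp [simplexPts, Fin.is_le]

theorem succ_succ_last_last : simplexPts (n + 2) (Fin.last _) (Fin.last _) = 1 := by
  simp [simplexPts]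

theorem scale_sq :
    (Real.sqrt (((n : ℝ) + 2) ^ 2 - 1) / ((n : ℝ) + 2)) ^ 2 = 1 - (1 / ((n : ℝ) + 2)) ^ 2 := by
  have h : (1 : ℝ) ≤ ((n : ℝ) + 2) ^ 2 := by nlinarith [(n.cast_nonneg : (0 : ℝ) ≤ n)]
  rw [div_pow, Real.sq_sqrt (by linarith)]
  field_simp

theorem mul_transpose_succ_succ_castSucc_castSucc (i k : Fin (n + 2)) :
    (simplexPts (n + 2) * (simplexPts (n + 2))ᵀ) i.castSucc k.castSucc =
      (Real.sqrt (((n : ℝ) + 2) ^ 2 - 1) / ((n : ℝ) + 2)) ^ 2 *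
        (simplexPts (n + 1) * (simplexPts (n + 1))ᵀ) i k + (1 / ((n : ℝ) + 2)) ^ 2 := by
  rw [mul_apply, Fin.sum_univ_castSucc, mul_apply, Finset.mul_sum]
  simp only [transpose_apply, succ_succ_castSucc_castSucc, succ_succ_castSucc_last]
  congr 1
  · exact Finset.sum_congr rfl fun _ _ => by ring
  · ring

theorem mul_transpose_succ_succ_castSucc_last (i : Fin (n + 2)) :
    (simplexPts (n + 2) * (simplexPts (n + 2))ᵀ) i.castSucc (Fin.last _) = -1 / ((n : ℝ) + 2) := by
  simp [mul_apply, Fin.sum_univ_castSucc, succ_succ_last_castSucc, succ_succ_castSucc_last,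
    succ_succ_last_last]

theorem mul_transpose_succ_succ_last_castSucc (k : Fin (n + 2)) :
    (simplexPts (n + 2) * (simplexPts (n + 2))ᵀ) (Fin.last _) k.castSucc = -1 / ((n : ℝ) + 2) := by
  simp [mul_apply, Fin.sum_univ_castSucc, succ_succ_last_castSucc, succ_succ_castSucc_last,
    succ_succ_last_last]

theorem mul_transpose_succ_succ_last_last :
    (simplexPts (n + 2) * (simplexPts (n + 2))ᵀ) (Fin.last _) (Fin.last _) = 1 := by
  simp [mul_apply, Fin.sum_univ_castSucc, succ_succ_last_castSucc, succ_succ_last_last]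

theorem mul_transpose_succ_apply (i k : Fin (n + 2)) :
    (simplexPts (n + 1) * (simplexPts (n + 1))ᵀ) i k = if i = k then 1 else -1 / ((n : ℝ) + 1) := by
  induction n with
  | zero =>
    simp only [mul_apply, transpose_apply]
    fin_cases i <;> fin_cases k <;> simp [simplexPts]
  | succ n ih =>
    push_cast
    induction i using Fin.lastCases with
    | last =>
      induction k using Fin.lastCases with
      | last => simp [mul_transpose_succ_succ_last_last]
      | cast k =>
        rw [mul_transpose_succ_succ_last_castSucc, if_neg (Fin.castSucc_ne_last k).symm]
        ring
    | cast i =>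
      induction k using Fin.lastCases with
      | last =>
        rw [mul_transpose_succ_succ_castSucc_last, if_neg (Fin.castSucc_ne_last i)]
        ring
      | cast k =>
        rw [mul_transpose_succ_succ_castSucc_castSucc, ih, scale_sq]
        simp only [Fin.castSucc_inj]
        split_ifs <;> field_simp <;> ring

end simplexPts

/-- for every `d ≥ 1`,
`X_d X_dᵀ = ((d+1)/d) I_{d+1} - (1/d) 𝟙_{d+1} 𝟙_{d+1}ᵀ`. -/
theorem simplexPts_mul_transpose (d : ℕ) (hd : 1 ≤ d) :
    simplexPts d * (simplexPts d)ᵀ =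
      (((d : ℝ) + 1) / (d : ℝ)) • (1 : Matrix (Fin (d + 1)) (Fin (d + 1)) ℝ) -
        ((1 : ℝ) / (d : ℝ)) • Matrix.of (fun _ _ : Fin (d + 1) => (1 : ℝ)) := by
  obtain ⟨n, rfl⟩ := Nat.exists_eq_add_of_le' hd
  ext i k
  rw [simplexPts.mul_transpose_succ_apply]
  simp only [Matrix.sub_apply, Matrix.smul_apply, one_apply, of_apply, smul_eq_mul]
  push_cast
  split_ifs <;> field_simp <;> ring
end

section
/- For every y ∈ ℝ^d, the vector λ := (1/(d+1)) 𝟙_{d+1} + (d/(d+1)) X_d y ∈ ℝ^{d+1} satisfies X_d^T λ = y and 𝟙_{d+1}^T λ = 1; i.e., λ gives the barycentric coordinates of y with respect to the rows of X_d. -/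
open Matrix

/-- The barycentric coordinates of `y ∈ ℝ^d` with respect to the rows of `X_d`:
`λ(y) = (1/(d+1)) 𝟙_{d+1} + (d/(d+1)) X_d y`.  These are also the values at `y` of the
degree-one fundamental Lagrange polynomials for interpolation at the rows of `X_d`. -/
noncomputable def bary (d : ℕ) (y : Fin d → ℝ) : Fin (d + 1) → ℝ :=
  fun i => 1 / ((d : ℝ) + 1) + ((d : ℝ) / ((d : ℝ) + 1)) * (simplexPts d *ᵥ y) i

lemma simplexPts_colsum : ∀ (d : ℕ) (j : Fin d), ∑ i, simplexPts d i j = 0 := by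
  intro d
  induction d with
  | zero => exact fun j => j.elim0
  | succ n ih =>
    match n, ih with
    | 0, _ =>
      intro j
      simp [simplexPts, Fin.sum_univ_two]
    | (m+1), ih =>
      intro j
      rw [Fin.sum_univ_castSucc]
      by_cases hj : (j : ℕ) < m + 1
      · have hlast : simplexPts (m+2) (Fin.last (m+2)) j = 0 := by
          simp [simplexPts, hj]
        have hcast : ∀ i : Fin (m+2), simplexPts (m+2) i.castSucc j
            = (Real.sqrt (((m:ℝ)+2)^2 - 1) / ((m:ℝ)+2)) * simplexPts (m+1) i ⟨j, hj⟩ := by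
          intro i
          have hi : (i.castSucc : ℕ) < m + 2 := i.isLt
          simp [simplexPts, hj, hi]
        rw [hlast, add_zero, Finset.sum_congr rfl fun i _ => hcast i, ← Finset.mul_sum,
          ih ⟨j, hj⟩, mul_zero]
      · have hcast : ∀ i : Fin (m+2), simplexPts (m+2) i.castSucc j = -1/((m:ℝ)+2) := by
          intro i
          have hi : (i.castSucc : ℕ) < m + 2 := i.isLt
          simp [simplexPts, hj, hi]
        have hlast : simplexPts (m+2) (Fin.last (m+2)) j = 1 := by
          simp [simplexPts, hj]
        rw [hlast, Finset.sum_congr rfl fun i _ => hcast i, Finset.sum_const]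
        have h2 : ((m:ℝ)+2) ≠ 0 := by positivity
        simp only [Finset.card_univ, Fintype.card_fin, nsmul_eq_mul]
        push_cast
        field_simp
        ring

lemma simplexPts_gram : ∀ (d : ℕ), 1 ≤ d → ∀ (j k : Fin d),
    ∑ i, simplexPts d i j * simplexPts d i k = if j = k then ((d:ℝ)+1)/d else 0 := by
  intro d
  induction d with
  | zero => intro h; omega
  | succ n ih =>
    match n, ih with
    | 0, _ =>
      intro _ j k
      have hj : j = 0 := Fin.ext (by omega)
      have hk : k = 0 := Fin.ext (by omega)
      subst hj; subst hk
      simp [simplexPts, Fin.sum_univ_succ]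
    | (m+1), ih =>
      intro _ j k
      have hsq : Real.sqrt (((m:ℝ)+2)^2 - 1) ^ 2 = ((m:ℝ)+2)^2 - 1 := by
        rw [Real.sq_sqrt]
        have h0 : (0:ℝ) ≤ (m:ℝ) := Nat.cast_nonneg m
        nlinarith
      have h2 : ((m:ℝ)+2) ≠ 0 := by positivity
      have h1 : ((m:ℝ)+1) ≠ 0 := by positivity
      rw [Fin.sum_univ_castSucc]
      by_cases hj : (j : ℕ) < m + 1 <;> by_cases hk : (k : ℕ) < m + 1
      · -- both small
        have hlast : simplexPts (m+2) (Fin.last (m+2)) j * simplexPts (m+2) (Fin.last (m+2)) k = 0 := by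
          simp [simplexPts, hj, hk]
        have hcast : ∀ i : Fin (m+2), simplexPts (m+2) i.castSucc j * simplexPts (m+2) i.castSucc k
            = (Real.sqrt (((m:ℝ)+2)^2 - 1) / ((m:ℝ)+2))^2 *
              (simplexPts (m+1) i ⟨j, hj⟩ * simplexPts (m+1) i ⟨k, hk⟩) := by
          intro i
          have hi : (i.castSucc : ℕ) < m + 2 := i.isLt
          simp [simplexPts, hj, hk, hi]
          ring
        rw [hlast, add_zero, Finset.sum_congr rfl fun i _ => hcast i, ← Finset.mul_sum,
          ih (by omega) ⟨j, hj⟩ ⟨k, hk⟩]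
        have hjk : (j = k) ↔ ((⟨(j:ℕ), hj⟩ : Fin (m+1)) = ⟨(k:ℕ), hk⟩) := by
          constructor <;> intro h
          · subst h; rfl
          · exact Fin.ext (by simpa using congrArg Fin.val h)
        by_cases hh : j = k
        · rw [if_pos hh, if_pos (hjk.mp hh), div_pow, hsq]
          push_cast
          field_simp
          ring
        · rw [if_neg hh, if_neg (fun h => hh (hjk.mpr h)), mul_zero]
      · -- j small, k large
        have hlast : simplexPts (m+2) (Fin.last (m+2)) j * simplexPts (m+2) (Fin.last (m+2)) k = 0 := by
          simp [simplexPts, hj, hk]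
        have hcast : ∀ i : Fin (m+2), simplexPts (m+2) i.castSucc j * simplexPts (m+2) i.castSucc k
            = (Real.sqrt (((m:ℝ)+2)^2 - 1) / ((m:ℝ)+2)) * (-1/((m:ℝ)+2)) *
              simplexPts (m+1) i ⟨j, hj⟩ := by
          intro i
          have hi : (i.castSucc : ℕ) < m + 2 := i.isLt
          simp [simplexPts, hj, hk, hi]
          ring
        have hne : j ≠ k := fun h => hk (h ▸ hj)
        rw [hlast, add_zero, Finset.sum_congr rfl fun i _ => hcast i, ← Finset.mul_sum,
          simplexPts_colsum (m+1) ⟨j, hj⟩, mul_zero, if_neg hne]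
      · -- j large, k small
        have hlast : simplexPts (m+2) (Fin.last (m+2)) j * simplexPts (m+2) (Fin.last (m+2)) k = 0 := by
          simp [simplexPts, hj, hk]
        have hcast : ∀ i : Fin (m+2), simplexPts (m+2) i.castSucc j * simplexPts (m+2) i.castSucc k
            = (Real.sqrt (((m:ℝ)+2)^2 - 1) / ((m:ℝ)+2)) * (-1/((m:ℝ)+2)) *
              simplexPts (m+1) i ⟨k, hk⟩ := by
          intro i
          have hi : (i.castSucc : ℕ) < m + 2 := i.isLt
          simp [simplexPts, hj, hk, hi]
          ring
        have hne : j ≠ k := fun h => hj (h ▸ hk)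
        rw [hlast, add_zero, Finset.sum_congr rfl fun i _ => hcast i, ← Finset.mul_sum,
          simplexPts_colsum (m+1) ⟨k, hk⟩, mul_zero, if_neg hne]
      · -- both large
        have heq : j = k := Fin.ext (by omega)
        have hlast : simplexPts (m+2) (Fin.last (m+2)) j * simplexPts (m+2) (Fin.last (m+2)) k = 1 := by
          simp [simplexPts, hj, hk]
        have hcast : ∀ i : Fin (m+2), simplexPts (m+2) i.castSucc j * simplexPts (m+2) i.castSucc k
            = (-1/((m:ℝ)+2)) * (-1/((m:ℝ)+2)) := by
          intro i
          have hi : (i.castSucc : ℕ) < m + 2 := i.isLt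
          simp [simplexPts, hj, hk, hi]
        rw [hlast, Finset.sum_congr rfl fun i _ => hcast i, Finset.sum_const, if_pos heq]
        simp only [Finset.card_univ, Fintype.card_fin, nsmul_eq_mul]
        push_cast
        field_simp
        ring

/-- for every `y ∈ ℝ^d`, the vector
`λ = (1/(d+1)) 𝟙_{d+1} + (d/(d+1)) X_d y` satisfies `X_dᵀ λ = y` and `𝟙ᵀ λ = 1`,
i.e. `λ` gives the barycentric coordinates of `y` with respect to the rows of `X_d`. -/
theorem bary_is_barycentric (d : ℕ) (hd : 1 ≤ d) (y : Fin d → ℝ) :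
    (simplexPts d)ᵀ *ᵥ bary d y = y ∧ ∑ j : Fin (d + 1), bary d y j = 1 := by
  have hd0 : ((d:ℝ)) ≠ 0 := by
    have : (1:ℝ) ≤ (d:ℝ) := by exact_mod_cast hd
    linarith
  have hd1 : ((d:ℝ)+1) ≠ 0 := by positivity
  constructor
  · funext j
    simp only [mulVec, dotProduct, transpose_apply, bary, Pi.add_apply]
    have expand : ∀ i : Fin (d+1),
        simplexPts d i j * (1 / ((d:ℝ) + 1) + ((d:ℝ) / ((d:ℝ) + 1)) * ∑ k, simplexPts d i k * y k)
        = (1 / ((d:ℝ) + 1)) * simplexPts d i j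
          + ((d:ℝ) / ((d:ℝ) + 1)) * (simplexPts d i j * ∑ k, simplexPts d i k * y k) := by
      intro i; ring
    rw [Finset.sum_congr rfl fun i _ => expand i, Finset.sum_add_distrib,
      ← Finset.mul_sum, ← Finset.mul_sum, simplexPts_colsum d j, mul_zero, zero_add]
    have key : ∑ i, simplexPts d i j * ∑ k, simplexPts d i k * y k = (((d:ℝ)+1)/d) * y j := by
      simp only [Finset.mul_sum]
      rw [Finset.sum_comm]
      have inner : ∀ k : Fin d, ∑ i, simplexPts d i j * (simplexPts d i k * y k)
          = (if j = k then ((d:ℝ)+1)/d else 0) * y k := by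
        intro k
        rw [← simplexPts_gram d hd j k, Finset.sum_mul]
        exact Finset.sum_congr rfl fun i _ => by ring
      rw [Finset.sum_congr rfl fun k _ => inner k]
      simp [Finset.sum_ite_eq]
    rw [key]
    field_simp
  · simp only [bary, Finset.sum_add_distrib, ← Finset.mul_sum, Finset.sum_const,
      Finset.card_univ, Fintype.card_fin, nsmul_eq_mul]
    have : ∑ i, (simplexPts d *ᵥ y) i = 0 := by
      simp only [mulVec, dotProduct]
      rw [Finset.sum_comm]
      simp_rw [← Finset.sum_mul]
      simp [simplexPts_colsum d]
    rw [this, mul_zero, add_zero]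
    push_cast
    field_simp
end

section
/- For every y ∈ ℝ^d with ‖y‖₂ ≤ 1, the vector λ(y) = (1/(d+1)) 𝟙_{d+1} + (d/(d+1)) X_d y satisfies ‖λ(y)‖₁ = Σ_{j=1}^{d+1} |λ_j(y)| ≤ √(d+1); i.e., the degree-one Lebesgue constant of the points given by the rows of X_d on the unit ball of ℝ^d is at most √(d+1). -/
open Matrix

lemma sp_cc (d : ℕ) (i : Fin (d+2)) (j : Fin (d+1)) :
    simplexPts (d+2) i.castSucc j.castSucc
      = (Real.sqrt (((d : ℝ) + 2) ^ 2 - 1) / ((d : ℝ) + 2)) * simplexPts (d+1) i j := by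
  simp [simplexPts, i.isLt, j.isLt]

lemma sp_cl (d : ℕ) (i : Fin (d+2)) :
    simplexPts (d+2) i.castSucc (Fin.last (d+1)) = -1 / ((d : ℝ) + 2) := by
  simp [simplexPts, i.isLt]

lemma sp_lc (d : ℕ) (j : Fin (d+1)) :
    simplexPts (d+2) (Fin.last (d+2)) j.castSucc = 0 := by
  simp [simplexPts, j.isLt]

lemma sp_ll (d : ℕ) :
    simplexPts (d+2) (Fin.last (d+2)) (Fin.last (d+1)) = 1 := by
  simp [simplexPts]

lemma sp_Rsq (d : ℕ) :
    (Real.sqrt (((d : ℝ) + 2) ^ 2 - 1) / ((d : ℝ) + 2))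
      * (Real.sqrt (((d : ℝ) + 2) ^ 2 - 1) / ((d : ℝ) + 2))
      = (((d : ℝ) + 2) ^ 2 - 1) / ((d : ℝ) + 2) ^ 2 := by
  rw [div_mul_div_comm, Real.mul_self_sqrt (by nlinarith [Nat.cast_nonneg (α := ℝ) d])]
  ring_nf

lemma colsum : ∀ (d : ℕ) (j : Fin (d+1)), ∑ i, simplexPts (d+1) i j = 0 := by
  intro d
  induction d with
  | zero =>
    intro j
    simp [simplexPts, Fin.sum_univ_two]
  | succ d ih =>
    intro j
    induction j using Fin.lastCases with
    | last =>
      rw [Fin.sum_univ_castSucc]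
      simp only [sp_cl, sp_ll, Finset.sum_const, Finset.card_univ, Fintype.card_fin, nsmul_eq_mul]
      push_cast
      have h2 : ((d : ℝ) + 2) ≠ 0 := by positivity
      field_simp
      ring
    | cast j =>
      rw [Fin.sum_univ_castSucc]
      simp only [sp_cc, sp_lc, ← Finset.mul_sum, ih j]
      ring

lemma gram : ∀ (d : ℕ) (j k : Fin (d+1)),
    ∑ i, simplexPts (d+1) i j * simplexPts (d+1) i k
      = if j = k then ((d : ℝ) + 2) / ((d : ℝ) + 1) else 0 := by
  intro d
  induction d with
  | zero =>
    intro j k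
    have hj : j = k := by omega
    subst hj
    simp [simplexPts, Fin.sum_univ_two]
    norm_num
  | succ d ih =>
    intro j k
    have h2 : ((d : ℝ) + 2) ≠ 0 := by positivity
    have h1 : ((d : ℝ) + 1) ≠ 0 := by positivity
    induction j using Fin.lastCases with
    | last =>
      induction k using Fin.lastCases with
      | last =>
        rw [Fin.sum_univ_castSucc]
        simp only [sp_cl, sp_ll, Finset.sum_const, Finset.card_univ, Fintype.card_fin,
          nsmul_eq_mul, if_pos rfl]
        push_cast
        field_simp
        ring
      | cast k =>
        rw [Fin.sum_univ_castSucc]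
        simp only [sp_cl, sp_ll, sp_lc, sp_cc, mul_zero, mul_one]
        rw [if_neg (by simp [Fin.ext_iff]; omega)]
        have hrw : ∀ i : Fin (d+2),
            -1 / ((d:ℝ) + 2) * ((Real.sqrt (((d : ℝ) + 2) ^ 2 - 1) / ((d : ℝ) + 2)) * simplexPts (d+1) i k)
            = (-1 / ((d:ℝ) + 2) * (Real.sqrt (((d : ℝ) + 2) ^ 2 - 1) / ((d : ℝ) + 2))) * simplexPts (d+1) i k :=
          fun i => by ring
        simp only [hrw, ← Finset.mul_sum, colsum d k]
        ring
    | cast j =>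
      induction k using Fin.lastCases with
      | last =>
        rw [Fin.sum_univ_castSucc]
        simp only [sp_cl, sp_ll, sp_lc, sp_cc, zero_mul, mul_one]
        rw [if_neg (by simp [Fin.ext_iff]; omega)]
        have hrw : ∀ i : Fin (d+2),
            (Real.sqrt (((d : ℝ) + 2) ^ 2 - 1) / ((d : ℝ) + 2)) * simplexPts (d+1) i j * (-1 / ((d:ℝ) + 2))
            = ((Real.sqrt (((d : ℝ) + 2) ^ 2 - 1) / ((d : ℝ) + 2)) * (-1 / ((d:ℝ) + 2))) * simplexPts (d+1) i j :=
          fun i => by ring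
        simp only [hrw, ← Finset.mul_sum, colsum d j]
        ring
      | cast k =>
        rw [Fin.sum_univ_castSucc]
        simp only [sp_lc, sp_cc, zero_mul, add_zero]
        have hrw : ∀ i : Fin (d+2),
            (Real.sqrt (((d : ℝ) + 2) ^ 2 - 1) / ((d : ℝ) + 2)) * simplexPts (d+1) i j
              * ((Real.sqrt (((d : ℝ) + 2) ^ 2 - 1) / ((d : ℝ) + 2)) * simplexPts (d+1) i k)
            = ((Real.sqrt (((d : ℝ) + 2) ^ 2 - 1) / ((d : ℝ) + 2))
                * (Real.sqrt (((d : ℝ) + 2) ^ 2 - 1) / ((d : ℝ) + 2)))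
              * (simplexPts (d+1) i j * simplexPts (d+1) i k) := fun i => by ring
        simp only [hrw, ← Finset.mul_sum, ih j k, sp_Rsq,
          Fin.castSucc_inj]
        by_cases hjk : j = k
        · rw [if_pos hjk, if_pos hjk]
          push_cast
          field_simp
          ring
        · rw [if_neg hjk, if_neg hjk, mul_zero]

/-- for every `y` in the unit ball of `ℝ^d`, the Lebesgue function
`‖λ(y)‖₁ = ∑ⱼ |λⱼ(y)|` of the degree-one interpolation at the rows of `X_d` is at most
`√(d+1)`; i.e. the Lebesgue constant on the unit ball is at most `√(d+1)`. -/
theorem lebesgue_function_le_sqrt (d : ℕ) (hd : 1 ≤ d) (y : Fin d → ℝ)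
    (hy : Real.sqrt (∑ k : Fin d, y k ^ 2) ≤ 1) :
    ∑ j : Fin (d + 1), |bary d y j| ≤ Real.sqrt ((d : ℝ) + 1) := by
  obtain ⟨e, rfl⟩ : ∃ e, d = e + 1 := ⟨d - 1, by omega⟩
  have hy2 : ∑ k : Fin (e+1), y k ^ 2 ≤ 1 := by
    have h0 : (0:ℝ) ≤ ∑ k : Fin (e+1), y k ^ 2 := by positivity
    nlinarith [Real.sq_sqrt h0, Real.sqrt_nonneg (∑ k : Fin (e+1), y k ^ 2)]
  set v : Fin (e + 2) → ℝ := fun j => (simplexPts (e+1) *ᵥ y) j with hv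
  have hv1 : ∑ j, v j = 0 := by
    simp only [hv, mulVec, dotProduct]
    rw [Finset.sum_comm]
    simp only [← Finset.sum_mul, colsum e, zero_mul, Finset.sum_const_zero]
  have hv2 : ∑ j, v j ^ 2 = (((e:ℝ) + 2) / ((e:ℝ)+1)) * ∑ k, y k ^ 2 := by
    simp only [hv, mulVec, dotProduct]
    have expand : ∀ j : Fin (e+2),
        (∑ k, simplexPts (e+1) j k * y k) ^ 2
        = ∑ k, ∑ l, (simplexPts (e+1) j k * simplexPts (e+1) j l) * (y k * y l) := by
      intro j
      rw [sq, Finset.sum_mul_sum]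
      exact Finset.sum_congr rfl fun k _ => Finset.sum_congr rfl fun l _ => by ring
    simp only [expand]
    rw [Finset.sum_comm]
    have swap2 : ∀ k : Fin (e+1), ∑ j : Fin (e+2), ∑ l : Fin (e+1),
        (simplexPts (e+1) j k * simplexPts (e+1) j l) * (y k * y l)
        = ∑ l : Fin (e+1), (∑ j : Fin (e+2), simplexPts (e+1) j k * simplexPts (e+1) j l) * (y k * y l) := by
      intro k
      rw [Finset.sum_comm]
      exact Finset.sum_congr rfl fun l _ => by rw [Finset.sum_mul]
    simp only [swap2, gram e]
    have hone : ∀ k : Fin (e+1),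
        ∑ l : Fin (e+1), (if k = l then ((e:ℝ)+2)/((e:ℝ)+1) else 0) * (y k * y l)
        = ((e:ℝ)+2)/((e:ℝ)+1) * y k ^ 2 := by
      intro k
      rw [Finset.sum_eq_single k]
      · rw [if_pos rfl]; ring
      · intro l _ hl; rw [if_neg (Ne.symm hl), zero_mul]
      · intro h; exact absurd (Finset.mem_univ k) h
    simp only [hone, ← Finset.mul_sum]
  have h1 : ((e:ℝ) + 1) ≠ 0 := by positivity
  have h2 : ((e:ℝ) + 2) ≠ 0 := by positivity
  have hSle : ∑ j : Fin (e+2), bary (e+1) y j ^ 2 ≤ 1 := by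
    have expand : ∀ j : Fin (e+2), bary (e+1) y j ^ 2
        = (1 / ((e:ℝ)+2))^2 + 2 * (1/((e:ℝ)+2)) * (((e:ℝ)+1)/((e:ℝ)+2)) * v j
          + (((e:ℝ)+1)/((e:ℝ)+2))^2 * v j ^ 2 := by
      intro j
      simp only [bary, hv]
      push_cast
      ring
    rw [Finset.sum_congr rfl fun j _ => expand j]
    rw [Finset.sum_add_distrib, Finset.sum_add_distrib, ← Finset.mul_sum, ← Finset.mul_sum,
      hv1, hv2, Finset.sum_const, Finset.card_univ, Fintype.card_fin, nsmul_eq_mul]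
    have key : ((e+2:ℕ):ℝ) * (1 / ((e:ℝ)+2))^2 + 2 * (1/((e:ℝ)+2)) * (((e:ℝ)+1)/((e:ℝ)+2)) * 0
          + (((e:ℝ)+1)/((e:ℝ)+2))^2 * ((((e:ℝ) + 2) / ((e:ℝ)+1)) * ∑ k, y k ^ 2)
        = 1/((e:ℝ)+2) + (((e:ℝ)+1)/((e:ℝ)+2)) * ∑ k, y k ^ 2 := by
      push_cast
      field_simp
      ring
    rw [key]
    have hfrac : (0:ℝ) ≤ ((e:ℝ)+1)/((e:ℝ)+2) := by positivity
    have hmul : (((e:ℝ)+1)/((e:ℝ)+2)) * ∑ k, y k ^ 2 ≤ ((e:ℝ)+1)/((e:ℝ)+2) := by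
      calc (((e:ℝ)+1)/((e:ℝ)+2)) * ∑ k, y k ^ 2 ≤ (((e:ℝ)+1)/((e:ℝ)+2)) * 1 :=
            mul_le_mul_of_nonneg_left hy2 hfrac
        _ = ((e:ℝ)+1)/((e:ℝ)+2) := mul_one _
    have hsum : 1/((e:ℝ)+2) + ((e:ℝ)+1)/((e:ℝ)+2) = 1 := by field_simp; ring
    linarith
  have habs : ∀ j : Fin (e+2), |bary (e+1) y j| ^ 2 = bary (e+1) y j ^ 2 := fun j => sq_abs _
  have cs := sq_sum_le_card_mul_sum_sq (s := (Finset.univ : Finset (Fin (e+2))))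
    (f := fun j => |bary (e+1) y j|)
  simp only [Finset.card_univ, Fintype.card_fin, habs] at cs
  have hle : (∑ j : Fin (e+2), |bary (e+1) y j|) ^ 2 ≤ ((e+1 : ℕ):ℝ) + 1 := by
    calc (∑ j : Fin (e+2), |bary (e+1) y j|) ^ 2
        ≤ ((e+2 : ℕ) : ℝ) * ∑ j : Fin (e+2), bary (e+1) y j ^ 2 := by exact_mod_cast cs
      _ ≤ ((e+2 : ℕ) : ℝ) * 1 := mul_le_mul_of_nonneg_left hSle (by positivity)
      _ = ((e+1 : ℕ):ℝ) + 1 := by push_cast; ring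
  have hnn : 0 ≤ ∑ j : Fin (e+2), |bary (e+1) y j| :=
    Finset.sum_nonneg fun j _ => abs_nonneg _
  calc ∑ j : Fin (e+2), |bary (e+1) y j|
      = Real.sqrt ((∑ j : Fin (e+2), |bary (e+1) y j|) ^ 2) := (Real.sqrt_sq hnn).symm
    _ ≤ Real.sqrt (((e+1:ℕ):ℝ) + 1) := Real.sqrt_le_sqrt hle
end

section
/- The degree-one Lebesgue constant Λ₁ = max_{‖y‖₂ ≤ 1} ‖λ(y)‖₁ for interpolation at the rows of X_d on the unit ball of ℝ^d equals max over sign vectors ε ∈ {±1}^{d+1} of (1/(d+1))·( s + √d · √((d+1)² − s²) ), where s := Σ_{j=1}^{d+1} ε_j. -/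
open Matrix

/-!
The rows `xᵢ` of `X_d` satisfy `d ⟪xᵢ, xⱼ⟫ = (d + 1) δᵢⱼ - 1`. For a sign vector `ε` with
`s = ∑ εⱼ` and `w = X_dᵀ ε`, this gives `⟪ε, λ(y)⟫ = (s + d ⟪w, y⟫) / (d + 1)` and
`d ‖w‖² = (d + 1)² - s²`. As `‖λ(y)‖₁ = max_ε ⟪ε, λ(y)⟫`, the Lebesgue constant is
`max_ε max_{‖y‖ ≤ 1} ⟪ε, λ(y)⟫`, and by Cauchy–Schwarz the inner maximum is attained at
`y = w / ‖w‖`, where `d ‖w‖ = √d √((d + 1)² - s²)`.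
-/

section SimplexPts

variable (d : ℕ)

lemma simplexPts_castSucc_castSucc (i : Fin (d + 2)) (k : Fin (d + 1)) :
    simplexPts (d + 2) i.castSucc k.castSucc =
      √(((d : ℝ) + 2) ^ 2 - 1) / ((d : ℝ) + 2) * simplexPts (d + 1) i k := by
  simp [simplexPts, k.isLt]

lemma simplexPts_last_castSucc (k : Fin (d + 1)) :
    simplexPts (d + 2) (Fin.last (d + 2)) k.castSucc = 0 := by
  simp [simplexPts, k.isLt]

lemma simplexPts_castSucc_last (i : Fin (d + 2)) :
    simplexPts (d + 2) i.castSucc (Fin.last (d + 1)) = -1 / ((d : ℝ) + 2) := by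
  simp [simplexPts]

lemma simplexPts_last_last :
    simplexPts (d + 2) (Fin.last (d + 2)) (Fin.last (d + 1)) = 1 := by
  simp [simplexPts]

lemma simplexPts_castSucc_dotProduct_castSucc (i j : Fin (d + 2)) :
    simplexPts (d + 2) i.castSucc ⬝ᵥ simplexPts (d + 2) j.castSucc =
      ((d : ℝ) + 1) * ((d : ℝ) + 3) / ((d : ℝ) + 2) ^ 2 *
          (simplexPts (d + 1) i ⬝ᵥ simplexPts (d + 1) j) + 1 / ((d : ℝ) + 2) ^ 2 := by
  have hR : √(((d : ℝ) + 2) ^ 2 - 1) ^ 2 = ((d : ℝ) + 1) * ((d : ℝ) + 3) := by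
    rw [Real.sq_sqrt (by nlinarith [d.cast_nonneg (α := ℝ)])]; ring
  rw [dotProduct, Fin.sum_univ_castSucc, dotProduct, Finset.mul_sum]
  simp only [simplexPts_castSucc_castSucc, simplexPts_castSucc_last]
  have hd : (d : ℝ) + 2 ≠ 0 := by positivity
  congr 1
  · refine Finset.sum_congr rfl fun k _ => ?_
    rw [← hR]
    field_simp
  · field_simp

lemma simplexPts_last_dotProduct_castSucc (j : Fin (d + 2)) :
    simplexPts (d + 2) (Fin.last (d + 2)) ⬝ᵥ simplexPts (d + 2) j.castSucc =
      -1 / ((d : ℝ) + 2) := by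
  simp [dotProduct, Fin.sum_univ_castSucc, simplexPts_last_castSucc, simplexPts_castSucc_last,
    simplexPts_last_last]

lemma simplexPts_last_dotProduct_last :
    simplexPts (d + 2) (Fin.last (d + 2)) ⬝ᵥ simplexPts (d + 2) (Fin.last (d + 2)) = 1 := by
  simp [dotProduct, Fin.sum_univ_castSucc, simplexPts_last_castSucc, simplexPts_last_last]

end SimplexPts

-- Scaled by `d`, the Gram identity also covers `d = 0`, where `X_0` is the empty `1 × 0` matrix.
lemma natCast_mul_simplexPts_dotProduct : ∀ (d : ℕ) (i j : Fin (d + 1)),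
    (d : ℝ) * (simplexPts d i ⬝ᵥ simplexPts d j) = if i = j then (d : ℝ) else -1
  | 0, i, j => by simp [Fin.fin_one_eq_zero i, Fin.fin_one_eq_zero j]
  | 1, i, j => by
    fin_cases i <;> fin_cases j <;> simp [simplexPts, dotProduct]
  | d + 2, i, j => by
    have hd : (d : ℝ) + 2 ≠ 0 := by positivity
    induction i using Fin.lastCases with
    | last =>
      induction j using Fin.lastCases with
      | last => simp [simplexPts_last_dotProduct_last]
      | cast j =>
        rw [simplexPts_last_dotProduct_castSucc, if_neg (Fin.castSucc_ne_last j).symm]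
        push_cast
        field_simp
    | cast i =>
      induction j using Fin.lastCases with
      | last =>
        rw [dotProduct_comm, simplexPts_last_dotProduct_castSucc,
          if_neg (Fin.castSucc_ne_last i)]
        push_cast
        field_simp
      | cast j =>
        have IH := natCast_mul_simplexPts_dotProduct (d + 1) i j
        rw [simplexPts_castSucc_dotProduct_castSucc]
        simp only [Fin.castSucc_inj]
        push_cast at IH ⊢
        split_ifs at IH ⊢ <;> field_simp <;> linear_combination ((d : ℝ) + 3) * IH

lemma natCast_mul_sum_vecMul_simplexPts_sq (d : ℕ) (ε : Fin (d + 1) → ℝ) :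
    (d : ℝ) * ∑ k, (ε ᵥ* simplexPts d) k ^ 2 =
      ((d : ℝ) + 1) * ∑ j, ε j ^ 2 - (∑ j, ε j) ^ 2 :=
  calc (d : ℝ) * ∑ k, (ε ᵥ* simplexPts d) k ^ 2
      = ∑ i, ∑ j, ε i * ε j * ((d : ℝ) * (simplexPts d i ⬝ᵥ simplexPts d j)) := by
        simp_rw [vecMul, dotProduct, sq, Finset.sum_mul_sum, Finset.mul_sum]
        rw [Finset.sum_comm]
        refine Finset.sum_congr rfl fun i _ => ?_
        rw [Finset.sum_comm]
        refine Finset.sum_congr rfl fun j _ => Finset.sum_congr rfl fun k _ => ?_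
        ring
    _ = ∑ i, ∑ j, ε i * ε j * (((d : ℝ) + 1) * (if i = j then 1 else 0) - 1) := by
        simp_rw [natCast_mul_simplexPts_dotProduct]
        refine Finset.sum_congr rfl fun i _ => Finset.sum_congr rfl fun j _ => ?_
        split_ifs <;> ring
    _ = ((d : ℝ) + 1) * ∑ j, ε j ^ 2 - (∑ j, ε j) ^ 2 := by
        simp only [mul_sub, Finset.sum_sub_distrib, mul_ite, mul_one, mul_zero,
          Finset.sum_ite_eq, Finset.mem_univ, if_true]
        rw [sq (∑ j, ε j), Finset.sum_mul_sum, Finset.mul_sum]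
        congr 1
        exact Finset.sum_congr rfl fun j _ => by ring

lemma dotProduct_bary (d : ℕ) (ε : Fin (d + 1) → ℝ) (y : Fin d → ℝ) :
    ε ⬝ᵥ bary d y = (∑ j, ε j + d * ((ε ᵥ* simplexPts d) ⬝ᵥ y)) / ((d : ℝ) + 1) := by
  have hd : (d : ℝ) + 1 ≠ 0 := by positivity
  rw [← dotProduct_mulVec]
  simp only [bary, dotProduct, mul_add, Finset.sum_add_distrib, add_div, Finset.sum_div,
    Finset.mul_sum]
  congr 1 <;> refine Finset.sum_congr rfl fun j _ => ?_ <;> field_simp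

lemma dotProduct_le_sqrt_sum_sq {ι : Type*} [Fintype ι] (w y : ι → ℝ)
    (hy : √(∑ k, y k ^ 2) ≤ 1) : w ⬝ᵥ y ≤ √(∑ k, w k ^ 2) :=
  (Real.sum_mul_le_sqrt_mul_sqrt _ w y).trans
    (mul_le_of_le_one_right (Real.sqrt_nonneg _) hy)

lemma exists_dotProduct_eq_sqrt_sum_sq {ι : Type*} [Fintype ι] (w : ι → ℝ) :
    ∃ y : ι → ℝ, √(∑ k, y k ^ 2) ≤ 1 ∧ w ⬝ᵥ y = √(∑ k, w k ^ 2) := by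
  set S := ∑ k, w k ^ 2
  obtain hS | hS := (Real.sqrt_nonneg S).eq_or_lt
  · exact ⟨0, by simp, by simpa using hS⟩
  · have hS' : √S ^ 2 = S := Real.sq_sqrt (by positivity)
    have hww : w ⬝ᵥ w = S := by simp [S, dotProduct, sq]
    refine ⟨(√S)⁻¹ • w, ?_, ?_⟩
    · simp only [Pi.smul_apply, smul_eq_mul, mul_pow, ← Finset.mul_sum]
      rw [inv_pow, hS', inv_mul_cancel₀ (Real.sqrt_pos.mp hS).ne', Real.sqrt_one]
    · rw [dotProduct_smul, hww, smul_eq_mul]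
      field_simp
      exact hS'.symm

lemma exists_sign_dotProduct_eq_sum_abs {ι : Type*} [Fintype ι] (v : ι → ℝ) :
    ∃ ε : ι → ℝ, (∀ j, ε j = 1 ∨ ε j = -1) ∧ ∑ j, |v j| = ε ⬝ᵥ v := by
  refine ⟨fun j => if 0 ≤ v j then 1 else -1, fun j => by dsimp only; split_ifs <;> simp, ?_⟩
  refine Finset.sum_congr rfl fun j _ => ?_
  dsimp only
  split_ifs with h
  · simp [abs_of_nonneg h]
  · simp [abs_of_neg (not_le.mp h)]

lemma dotProduct_le_sum_abs_of_sign {ι : Type*} [Fintype ι] {ε : ι → ℝ}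
    (hε : ∀ j, ε j = 1 ∨ ε j = -1) (v : ι → ℝ) : ε ⬝ᵥ v ≤ ∑ j, |v j| := by
  refine Finset.sum_le_sum fun j _ => ?_
  rcases hε j with h | h <;> simp [h, le_abs_self, neg_le_abs]

lemma sqrt_mul_sqrt_sq_sub_sq_sum_of_sign (d : ℕ) {ε : Fin (d + 1) → ℝ}
    (hε : ∀ j, ε j = 1 ∨ ε j = -1) :
    √d * √(((d : ℝ) + 1) ^ 2 - (∑ j, ε j) ^ 2) = d * √(∑ k, (ε ᵥ* simplexPts d) k ^ 2) := by
  have hsq : ∑ j, ε j ^ 2 = (d : ℝ) + 1 := by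
    simp [Finset.sum_congr rfl fun j _ => show ε j ^ 2 = 1 by rcases hε j with h | h <;> simp [h]]
  have hnorm : ((d : ℝ) + 1) ^ 2 - (∑ j, ε j) ^ 2 = d * ∑ k, (ε ᵥ* simplexPts d) k ^ 2 := by
    rw [natCast_mul_sum_vecMul_simplexPts_sq, hsq, sq]
  rw [hnorm, Real.sqrt_mul d.cast_nonneg, ← mul_assoc, Real.mul_self_sqrt d.cast_nonneg]

theorem lebesgue_constant_eq_sign_max_general (d : ℕ) :
    sSup {t : ℝ | ∃ y : Fin d → ℝ, Real.sqrt (∑ k : Fin d, y k ^ 2) ≤ 1 ∧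
        t = ∑ j : Fin (d + 1), |bary d y j|} =
      sSup {t : ℝ | ∃ ε : Fin (d + 1) → ℝ, (∀ j, ε j = 1 ∨ ε j = -1) ∧
        t = ((∑ j : Fin (d + 1), ε j) +
              Real.sqrt d * Real.sqrt (((d : ℝ) + 1) ^ 2 - (∑ j : Fin (d + 1), ε j) ^ 2)) /
            ((d : ℝ) + 1)} := by
  refine csSup_eq_csSup_of_forall_exists_le ?_ ?_
  · rintro _ ⟨y, hy, rfl⟩
    obtain ⟨ε, hε, habs⟩ := exists_sign_dotProduct_eq_sum_abs (bary d y)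
    refine ⟨_, ⟨ε, hε, rfl⟩, ?_⟩
    rw [habs, dotProduct_bary, sqrt_mul_sqrt_sq_sub_sq_sum_of_sign d hε]
    gcongr
    exact dotProduct_le_sqrt_sum_sq _ _ hy
  · rintro _ ⟨ε, hε, rfl⟩
    obtain ⟨y, hy, hwy⟩ := exists_dotProduct_eq_sqrt_sum_sq (ε ᵥ* simplexPts d)
    refine ⟨_, ⟨y, hy, rfl⟩, ?_⟩
    rw [sqrt_mul_sqrt_sq_sub_sq_sum_of_sign d hε, ← hwy, ← dotProduct_bary]
    exact dotProduct_le_sum_abs_of_sign hε _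

/-- the degree-one Lebesgue constant `Λ₁ = max_{‖y‖₂ ≤ 1} ‖λ(y)‖₁` for
interpolation at the rows of `X_d` on the unit ball of `ℝ^d` equals the maximum over sign
vectors `ε ∈ {±1}^{d+1}` of `(s + √d ⬝ √((d+1)² - s²)) / (d+1)` where `s = ∑ⱼ εⱼ`. -/
theorem lebesgue_constant_eq_sign_max (d : ℕ) (hd : 1 ≤ d) :
    sSup {t : ℝ | ∃ y : Fin d → ℝ, Real.sqrt (∑ k : Fin d, y k ^ 2) ≤ 1 ∧
        t = ∑ j : Fin (d + 1), |bary d y j|} =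
      sSup {t : ℝ | ∃ ε : Fin (d + 1) → ℝ, (∀ j, ε j = 1 ∨ ε j = -1) ∧
        t = ((∑ j : Fin (d + 1), ε j) +
              Real.sqrt d * Real.sqrt (((d : ℝ) + 1) ^ 2 - (∑ j : Fin (d + 1), ε j) ^ 2)) /
            ((d : ℝ) + 1)} :=
  lebesgue_constant_eq_sign_max_general d
end

section
/- Let H ∈ ℝ^{(d+1)×(d+1)} be a Hadamard matrix whose first column is all ones, and define the row vector of Lagrange polynomial values at x ∈ ℝ^d by (ℓ_1(x), …, ℓ_{d+1}(x)) := (1/(d+1)) · (1, x^T) · H^T. Then for every x ∈ ℝ^d, Σ_{i=1}^{d+1} ℓ_i(x)² = (1 + ‖x‖₂²)/(d+1); in particular Σ_{i=1}^{d+1} ℓ_i(x)² ≤ 1 for all x ∈ [−1,1]^d, so the d+1 points given by the rows of H with first coordinate deleted form a Fejér set for the cube [−1,1]^d. -/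
open Matrix

/-- The values at `x ∈ ℝ^d` of the degree-one fundamental Lagrange polynomials associated to
the `d+1` points of the cube obtained by deleting the first column of the matrix `H` of
order `d+1`:  `(ℓ_1(x), …, ℓ_{d+1}(x)) = (1/(d+1)) (1, xᵀ) Hᵀ`. -/
noncomputable def cubeLagrange (d : ℕ) (H : Matrix (Fin (d + 1)) (Fin (d + 1)) ℝ)
    (x : Fin d → ℝ) (i : Fin (d + 1)) : ℝ :=
  (1 / ((d : ℝ) + 1)) * ∑ j : Fin (d + 1), (Fin.cons 1 x : Fin (d + 1) → ℝ) j * H i j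

/-- if `H` is a Hadamard matrix of order `d+1` whose first column is all ones,
then the associated degree-one Lagrange polynomials satisfy
`∑ᵢ ℓᵢ(x)² = (1 + ‖x‖₂²)/(d+1)` for every `x ∈ ℝ^d`; in particular `∑ᵢ ℓᵢ(x)² ≤ 1` on the
cube `[-1,1]^d`, so the `d+1` points given by the rows of `H` with first coordinate deleted
form a Fejér set for the cube. -/
theorem hadamard_fejer (d : ℕ) (hd : 1 ≤ d) (H : Matrix (Fin (d + 1)) (Fin (d + 1)) ℝ)
    (hent : ∀ i j, H i j = 1 ∨ H i j = -1)
    (hHad : H * Hᵀ = ((d : ℝ) + 1) • (1 : Matrix (Fin (d + 1)) (Fin (d + 1)) ℝ))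
    (hcol : ∀ i, H i 0 = 1) (x : Fin d → ℝ) :
    ∑ i : Fin (d + 1), cubeLagrange d H x i ^ 2 = (1 + ∑ k : Fin d, x k ^ 2) / ((d : ℝ) + 1) ∧
    ((∀ k, |x k| ≤ 1) → ∑ i : Fin (d + 1), cubeLagrange d H x i ^ 2 ≤ 1) := by
  have hc : ((d : ℝ) + 1) ≠ 0 := by positivity
  have hcpos : (0 : ℝ) < (d : ℝ) + 1 := by positivity
  set v : Fin (d + 1) → ℝ := Fin.cons 1 x with hv
  have h1 : H * ((((d : ℝ) + 1)⁻¹) • Hᵀ) = 1 := by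
    rw [Matrix.mul_smul, hHad, smul_smul, inv_mul_cancel₀ hc, one_smul]
  have h2 : ((((d : ℝ) + 1)⁻¹) • Hᵀ) * H = 1 := mul_eq_one_comm.mp h1
  have hTH : Hᵀ * H = ((d : ℝ) + 1) • (1 : Matrix (Fin (d + 1)) (Fin (d + 1)) ℝ) := by
    calc Hᵀ * H = ((d : ℝ) + 1) • (((((d : ℝ) + 1)⁻¹) • Hᵀ) * H) := by
          rw [Matrix.smul_mul, smul_smul, mul_inv_cancel₀ hc, one_smul]
      _ = ((d : ℝ) + 1) • 1 := by rw [h2]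
  have hentry : ∀ j k : Fin (d + 1), ∑ i, H i j * H i k
      = if j = k then ((d : ℝ) + 1) else 0 := by
    intro j k
    have := congrFun (congrFun hTH j) k
    simpa [Matrix.mul_apply, Matrix.transpose_apply, Matrix.one_apply, Matrix.smul_apply,
      mul_ite, mul_one, mul_zero] using this
  have key : ∑ i, (∑ j, v j * H i j) ^ 2 = ((d : ℝ) + 1) * ∑ j, v j ^ 2 := by
    have expand : ∀ i, (∑ j, v j * H i j) ^ 2
        = ∑ j, ∑ k, (v j * v k) * (H i j * H i k) := by
      intro i
      rw [sq, Finset.sum_mul_sum]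
      refine Finset.sum_congr rfl fun j _ => Finset.sum_congr rfl fun k _ => by ring
    calc ∑ i, (∑ j, v j * H i j) ^ 2
        = ∑ i, ∑ j, ∑ k, (v j * v k) * (H i j * H i k) := by
          exact Finset.sum_congr rfl fun i _ => expand i
      _ = ∑ j, ∑ k, ∑ i, (v j * v k) * (H i j * H i k) := by
          rw [Finset.sum_comm]
          exact Finset.sum_congr rfl fun j _ => Finset.sum_comm
      _ = ∑ j, ∑ k, (v j * v k) * ∑ i, H i j * H i k := by
          simp [Finset.mul_sum]
      _ = ((d : ℝ) + 1) * ∑ j, v j ^ 2 := by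
          simp_rw [hentry, mul_ite, mul_zero, Finset.sum_ite_eq]
          simp [Finset.mul_sum, sq]
          ring_nf
          exact Finset.sum_congr rfl fun j _ => by ring
  have hsumv : ∑ j, v j ^ 2 = 1 + ∑ k : Fin d, x k ^ 2 := by
    rw [Fin.sum_univ_succ]
    simp [hv]
  have main : ∑ i : Fin (d + 1), cubeLagrange d H x i ^ 2
      = (1 + ∑ k : Fin d, x k ^ 2) / ((d : ℝ) + 1) := by
    unfold cubeLagrange
    simp_rw [mul_pow, ← Finset.mul_sum]
    rw [key, hsumv]
    field_simp
  refine ⟨main, fun hx => ?_⟩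
  rw [main, div_le_one hcpos]
  have hbound : ∑ k : Fin d, x k ^ 2 ≤ (d : ℝ) := by
    calc ∑ k : Fin d, x k ^ 2 ≤ ∑ k : Fin d, (1 : ℝ) := by
          refine Finset.sum_le_sum fun k _ => ?_
          have := hx k
          nlinarith [abs_nonneg (x k), sq_abs (x k)]
      _ = (d : ℝ) := by simp
  linarith
end

section
/- Let H ∈ ℝ^{(d+1)×(d+1)} be a Hadamard matrix whose first column is all ones, with Lagrange polynomials (ℓ_1(x), …, ℓ_{d+1}(x)) = (1/(d+1)) (1, x^T) H^T. Then the degree-one Lebesgue constant on the cube satisfies Λ₁ = max_{x ∈ [−1,1]^d} Σ_{j=1}^{d+1} |ℓ_j(x)| ≤ √(d+1). -/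
open Matrix

/-- if `H` is a Hadamard matrix of order `d+1` whose first column is all ones,
then the degree-one Lebesgue constant on the cube satisfies
`Λ₁ = max_{x ∈ [-1,1]^d} ∑ⱼ |ℓⱼ(x)| ≤ √(d+1)`. -/
theorem hadamard_lebesgue_le (d : ℕ) (hd : 1 ≤ d) (H : Matrix (Fin (d + 1)) (Fin (d + 1)) ℝ)
    (hent : ∀ i j, H i j = 1 ∨ H i j = -1)
    (hHad : H * Hᵀ = ((d : ℝ) + 1) • (1 : Matrix (Fin (d + 1)) (Fin (d + 1)) ℝ))
    (hcol : ∀ i, H i 0 = 1) (x : Fin d → ℝ) (hx : ∀ k, |x k| ≤ 1) :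
    ∑ j : Fin (d + 1), |cubeLagrange d H x j| ≤ Real.sqrt ((d : ℝ) + 1) := by
  set v : Fin (d + 1) → ℝ := (Fin.cons 1 x : Fin (d + 1) → ℝ) with hv
  have hc : ((d : ℝ) + 1) ≠ 0 := by positivity
  -- HᵀH = (d+1)•1
  have hH2 : Hᵀ * H = ((d : ℝ) + 1) • (1 : Matrix (Fin (d + 1)) (Fin (d + 1)) ℝ) := by
    have h1 : H * (((d : ℝ) + 1)⁻¹ • Hᵀ) = 1 := by
      rw [Matrix.mul_smul, hHad, smul_smul, inv_mul_cancel₀ hc, one_smul]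
    have h2 := mul_eq_one_comm.mp h1
    calc Hᵀ * H = ((d : ℝ) + 1) • ((((d : ℝ) + 1)⁻¹ • Hᵀ) * H) := by
          rw [Matrix.smul_mul, smul_smul, mul_inv_cancel₀ hc, one_smul]
      _ = ((d : ℝ) + 1) • 1 := by rw [h2]
  have hentry : ∀ j k, ∑ i, H i j * H i k = if j = k then ((d : ℝ) + 1) else 0 := by
    intro j k
    have := congrFun (congrFun hH2 j) k
    simpa [Matrix.mul_apply, Matrix.transpose_apply, Matrix.one_apply, Matrix.smul_apply,
      mul_ite, mul_one, mul_zero] using this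
  set w : Fin (d + 1) → ℝ := fun i => ∑ j, v j * H i j with hw
  have hsum : ∑ i, (w i) ^ 2 = ((d : ℝ) + 1) * ∑ j, (v j) ^ 2 := by
    have key : ∀ j k, ∑ i, (v j * v k) * (H i j * H i k) =
        (v j * v k) * (if j = k then ((d : ℝ) + 1) else 0) := by
      intro j k
      rw [← Finset.mul_sum, hentry]
    have : ∑ i, (w i) ^ 2 = ∑ j, ∑ k, ∑ i, (v j * v k) * (H i j * H i k) := by
      simp only [hw, pow_two, Finset.sum_mul_sum]
      rw [Finset.sum_comm]
      refine Finset.sum_congr rfl fun j _ => ?_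
      rw [Finset.sum_comm]
      exact Finset.sum_congr rfl fun k _ => Finset.sum_congr rfl fun i _ => by ring
    rw [this]
    simp only [key, mul_ite, mul_zero]
    rw [Finset.mul_sum]
    refine Finset.sum_congr rfl fun j _ => ?_
    rw [Finset.sum_ite_eq]
    simp [pow_two]
    ring
  have hv2 : ∑ j, (v j) ^ 2 ≤ (d : ℝ) + 1 := by
    rw [Fin.sum_univ_succ]
    simp only [hv, Fin.cons_zero, Fin.cons_succ, one_pow]
    have : ∑ i : Fin d, (x i) ^ 2 ≤ ∑ _i : Fin d, (1 : ℝ) := by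
      refine Finset.sum_le_sum fun i _ => ?_
      have := hx i
      nlinarith [abs_nonneg (x i), sq_abs (x i)]
    simp only [Finset.sum_const, Finset.card_univ, Fintype.card_fin, smul_eq_mul, nsmul_eq_mul, mul_one] at this
    linarith
  have hCS : (∑ i, |w i|) ^ 2 ≤ ((d : ℝ) + 1) * ∑ i, (w i) ^ 2 := by
    calc (∑ i, |w i|) ^ 2 = (∑ i : Fin (d + 1), (1 : ℝ) * |w i|) ^ 2 := by simp
      _ ≤ (∑ i : Fin (d + 1), (1 : ℝ) ^ 2) * ∑ i, |w i| ^ 2 :=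
        Finset.sum_mul_sq_le_sq_mul_sq _ _ _
      _ = ((d : ℝ) + 1) * ∑ i, (w i) ^ 2 := by simp [sq_abs]
  have habs : ∑ j : Fin (d + 1), |cubeLagrange d H x j| =
      (1 / ((d : ℝ) + 1)) * ∑ i, |w i| := by
    rw [Finset.mul_sum]
    refine Finset.sum_congr rfl fun j _ => ?_
    rw [cubeLagrange, abs_mul, abs_of_pos (by positivity : (0:ℝ) < 1 / ((d : ℝ) + 1))]
  rw [habs]
  have hWnn : 0 ≤ ∑ i, |w i| := Finset.sum_nonneg fun i _ => abs_nonneg _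
  have hsq : Real.sqrt ((d : ℝ) + 1) ^ 2 = (d : ℝ) + 1 := Real.sq_sqrt (by positivity)
  have hsnn : 0 ≤ Real.sqrt ((d : ℝ) + 1) := Real.sqrt_nonneg _
  have hW2 : (∑ i, |w i|) ^ 2 ≤ ((d : ℝ) + 1) ^ 2 * ((d : ℝ) + 1) := by
    calc (∑ i, |w i|) ^ 2 ≤ ((d : ℝ) + 1) * ∑ i, (w i) ^ 2 := hCS
      _ = ((d : ℝ) + 1) * (((d : ℝ) + 1) * ∑ j, (v j) ^ 2) := by rw [hsum]
      _ ≤ ((d : ℝ) + 1) * (((d : ℝ) + 1) * ((d : ℝ) + 1)) := by nlinarith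
      _ = ((d : ℝ) + 1) ^ 2 * ((d : ℝ) + 1) := by ring
  have hd1 : (0 : ℝ) < (d : ℝ) + 1 := by positivity
  have h2 : (1 / ((d : ℝ) + 1) * ∑ i, |w i|) ^ 2 ≤ (d : ℝ) + 1 := by
    rw [mul_pow]
    have : (1 / ((d : ℝ) + 1)) ^ 2 * (((d : ℝ) + 1) ^ 2 * ((d : ℝ) + 1)) = (d : ℝ) + 1 := by
      field_simp
    nlinarith [sq_nonneg (1 / ((d : ℝ) + 1))]
  have hnn : 0 ≤ 1 / ((d : ℝ) + 1) * ∑ i, |w i| := by positivity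
  exact (Real.le_sqrt hnn (by positivity)).mpr h2
end

section
/- Suppose d = m² − 1 and H_{d+1} := H_m ⊗ H_m where H_m is a Hadamard matrix of order m; assume (after suitable normalization) that the first column of H_{d+1} is all ones. Let the Lagrange polynomials be (ℓ_1(x), …, ℓ_{d+1}(x)) = (1/(d+1)) (1, x^T) H_{d+1}^T. Then the degree-one Lebesgue constant on the cube satisfies Λ₁ = max_{x ∈ [−1,1]^d} Σ_{j=1}^{d+1} |ℓ_j(x)| = √(d+1). -/
open Matrix

/-- suppose `d = m² - 1` and `H_{d+1} = H_m ⊗ H_m` where `H_m` is a Hadamard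
matrix of order `m`; assume (after suitable normalization) that the first column of
`H_{d+1}` is all ones.  Then the degree-one Lebesgue constant on the cube satisfies
`Λ₁ = max_{x ∈ [-1,1]^d} ∑ⱼ |ℓⱼ(x)| = √(d+1)`. -/
theorem kronecker_hadamard_lebesgue_eq (m d : ℕ) (hm : 0 < m) (hd : d + 1 = m * m)
    (Hm : Matrix (Fin m) (Fin m) ℝ)
    (hent : ∀ i j, Hm i j = 1 ∨ Hm i j = -1)
    (hHad : Hm * Hmᵀ = (m : ℝ) • (1 : Matrix (Fin m) (Fin m) ℝ))
    (H : Matrix (Fin (d + 1)) (Fin (d + 1)) ℝ)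
    (hH : H = Matrix.reindex (finProdFinEquiv.trans (finCongr hd.symm))
        (finProdFinEquiv.trans (finCongr hd.symm)) (Matrix.kroneckerMap (· * ·) Hm Hm))
    (hcol : ∀ i, H i 0 = 1) :
    IsGreatest {t : ℝ | ∃ x : Fin d → ℝ, (∀ k, |x k| ≤ 1) ∧
        t = ∑ j : Fin (d + 1), |cubeLagrange d H x j|}
      (Real.sqrt ((d : ℝ) + 1)) := by
  haveI : NeZero m := ⟨hm.ne'⟩
  set eqv : Fin m × Fin m ≃ Fin (d + 1) := finProdFinEquiv.trans (finCongr hd.symm) with heqv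
  have hm0 : (m : ℝ) ≠ 0 := by positivity
  have hn0 : ((d : ℝ) + 1) ≠ 0 := by positivity
  have hnm : ((d : ℝ) + 1) = (m : ℝ) * m := by
    have : ((d + 1 : ℕ) : ℝ) = ((m * m : ℕ) : ℝ) := by rw [hd]
    push_cast at this
    linarith
  have hsqrt : Real.sqrt ((d : ℝ) + 1) = (m : ℝ) := by
    rw [hnm, Real.sqrt_mul_self (by positivity)]
  -- entries of H via the Kronecker structure
  have hHapp : ∀ p q : Fin m × Fin m, H (eqv p) (eqv q) = Hm p.1 q.1 * Hm p.2 q.2 := by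
    intro p q
    rw [hH]
    simp [Matrix.reindex_apply, Matrix.submatrix_apply, Matrix.kroneckerMap_apply, heqv]
  -- absolute values of entries
  have habs : ∀ i j, |Hm i j| = 1 := by
    intro i j; rcases hent i j with h | h <;> simp [h]
  have hsq1 : ∀ i j, Hm i j * Hm i j = 1 := by
    intro i j; rcases hent i j with h | h <;> rw [h] <;> norm_num
  -- column orthogonality for Hm
  have hHad' : Hmᵀ * Hm = (m : ℝ) • (1 : Matrix (Fin m) (Fin m) ℝ) := by
    have h1 : Hm * ((m : ℝ)⁻¹ • Hmᵀ) = 1 := by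
      rw [Matrix.mul_smul, hHad, smul_smul, inv_mul_cancel₀ hm0, one_smul]
    have h2 := mul_eq_one_comm.mp h1
    rw [Matrix.smul_mul] at h2
    calc Hmᵀ * Hm = (m : ℝ) • ((m : ℝ)⁻¹ • (Hmᵀ * Hm)) := by
          rw [smul_smul, mul_inv_cancel₀ hm0, one_smul]
      _ = (m : ℝ) • (1 : Matrix (Fin m) (Fin m) ℝ) := by rw [h2]
  have keym : ∀ a b : Fin m, (∑ p : Fin m, Hm p a * Hm p b) = if a = b then (m : ℝ) else 0 := by
    intro a b
    have h := congrFun (congrFun hHad' a) b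
    simpa [Matrix.mul_apply, Matrix.transpose_apply, Matrix.smul_apply, Matrix.one_apply,
      mul_ite, mul_one, mul_zero] using h
  have keym2 : ∀ a b : Fin m, (∑ q : Fin m, Hm a q * Hm b q) = if a = b then (m : ℝ) else 0 := by
    intro a b
    have h := congrFun (congrFun hHad a) b
    simpa [Matrix.mul_apply, Matrix.transpose_apply, Matrix.smul_apply, Matrix.one_apply,
      mul_ite, mul_one, mul_zero] using h
  -- column orthogonality for H
  have key : ∀ j k : Fin (d + 1),
      (∑ i, H i j * H i k) = if j = k then ((d : ℝ) + 1) else 0 := by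
    intro j k
    obtain ⟨q, rfl⟩ := eqv.surjective j
    obtain ⟨r, rfl⟩ := eqv.surjective k
    have h1 : (∑ i, H i (eqv q) * H i (eqv r))
        = ∑ p : Fin m × Fin m, H (eqv p) (eqv q) * H (eqv p) (eqv r) :=
      (Fintype.sum_equiv eqv _ _ (fun p => rfl)).symm
    rw [h1]
    calc ∑ p : Fin m × Fin m, H (eqv p) (eqv q) * H (eqv p) (eqv r)
        = ∑ p : Fin m × Fin m, (Hm p.1 q.1 * Hm p.1 r.1) * (Hm p.2 q.2 * Hm p.2 r.2) := by
          refine Finset.sum_congr rfl fun p _ => ?_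
          rw [hHapp, hHapp]; ring
      _ = (∑ p1 : Fin m, Hm p1 q.1 * Hm p1 r.1) * (∑ p2 : Fin m, Hm p2 q.2 * Hm p2 r.2) := by
          rw [Fintype.sum_prod_type'
            (f := fun a b => (Hm a q.1 * Hm a r.1) * (Hm b q.2 * Hm b r.2)),
            ← Finset.sum_mul_sum]
      _ = (if q.1 = r.1 then (m : ℝ) else 0) * (if q.2 = r.2 then (m : ℝ) else 0) := by
          rw [keym, keym]
      _ = if eqv q = eqv r then ((d : ℝ) + 1) else 0 := by
          by_cases h1 : q.1 = r.1 <;> by_cases h2 : q.2 = r.2 <;>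
            simp [h1, h2, Prod.ext_iff, hnm] <;> tauto
  -- Parseval-type identity
  have hsumsq : ∀ c : Fin (d + 1) → ℝ,
      (∑ i, (∑ j, c j * H i j) ^ 2) = ((d : ℝ) + 1) * ∑ j, (c j) ^ 2 := by
    intro c
    calc ∑ i, (∑ j, c j * H i j) ^ 2
        = ∑ i, ∑ j, ∑ k, (c j * c k) * (H i j * H i k) := by
          refine Finset.sum_congr rfl fun i _ => ?_
          rw [sq, Finset.sum_mul_sum]
          exact Finset.sum_congr rfl fun j _ => Finset.sum_congr rfl fun k _ => by ring
      _ = ∑ j, ∑ k, (c j * c k) * ∑ i, (H i j * H i k) := by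
          rw [Finset.sum_comm]
          refine Finset.sum_congr rfl fun j _ => ?_
          rw [Finset.sum_comm]
          exact Finset.sum_congr rfl fun k _ => (Finset.mul_sum _ _ _).symm
      _ = ∑ j, (c j * c j) * ((d : ℝ) + 1) := by
          refine Finset.sum_congr rfl fun j _ => ?_
          rw [Finset.sum_congr rfl fun k _ => by rw [key]]
          simp [mul_ite, mul_zero, Finset.sum_ite_eq]
      _ = ((d : ℝ) + 1) * ∑ j, (c j) ^ 2 := by
          rw [Finset.mul_sum]; exact Finset.sum_congr rfl fun j _ => by ring
  -- the extremal point
  have heq0 : eqv ((0 : Fin m), (0 : Fin m)) = 0 := by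
    apply Fin.ext
    simp [heqv, finProdFinEquiv]
  have hsymm0 : eqv.symm 0 = ((0 : Fin m), (0 : Fin m)) := by
    rw [← heq0, Equiv.symm_apply_apply]
  set ε := Hm 0 0 with hε
  set x : Fin d → ℝ := fun k => ε * Hm (eqv.symm k.succ).1 (eqv.symm k.succ).2 with hx
  have hcvals : ∀ j : Fin (d + 1),
      (Fin.cons 1 x : Fin (d + 1) → ℝ) j = ε * Hm (eqv.symm j).1 (eqv.symm j).2 := by
    intro j
    refine Fin.cases ?_ (fun k => ?_) j
    · rw [Fin.cons_zero, hsymm0, hε]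
      exact (hsq1 0 0).symm
    · rw [Fin.cons_succ]
  have hval : ∀ p : Fin m × Fin m,
      (∑ j, (Fin.cons 1 x : Fin (d + 1) → ℝ) j * H (eqv p) j) = ε * m * Hm p.1 p.2 := by
    intro p
    calc ∑ j, (Fin.cons 1 x : Fin (d + 1) → ℝ) j * H (eqv p) j
        = ∑ q : Fin m × Fin m,
            (Fin.cons 1 x : Fin (d + 1) → ℝ) (eqv q) * H (eqv p) (eqv q) :=
          (Fintype.sum_equiv eqv _ _ (fun q => rfl)).symm
      _ = ∑ q : Fin m × Fin m, (ε * Hm q.1 q.2) * (Hm p.1 q.1 * Hm p.2 q.2) := by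
          refine Finset.sum_congr rfl fun q _ => ?_
          rw [hcvals, Equiv.symm_apply_apply, hHapp]
      _ = ε * ∑ q1 : Fin m, Hm p.1 q1 * ∑ q2 : Fin m, Hm q1 q2 * Hm p.2 q2 := by
          rw [Fintype.sum_prod_type'
            (f := fun q1 q2 => (ε * Hm q1 q2) * (Hm p.1 q1 * Hm p.2 q2)), Finset.mul_sum]
          refine Finset.sum_congr rfl fun q1 _ => ?_
          rw [Finset.mul_sum, Finset.mul_sum]
          exact Finset.sum_congr rfl fun q2 _ => by ring
      _ = ε * ∑ q1 : Fin m, Hm p.1 q1 * (if q1 = p.2 then (m : ℝ) else 0) := by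
          congr 1
          exact Finset.sum_congr rfl fun q1 _ => by rw [keym2]
      _ = ε * m * Hm p.1 p.2 := by
          rw [Finset.sum_congr rfl fun q1 _ => (mul_ite _ _ _ _ : Hm p.1 q1 * _ = _)]
          simp [Finset.sum_ite_eq]
          ring
  constructor
  · -- membership: the maximum is attained
    refine ⟨x, fun k => ?_, ?_⟩
    · rw [hx]
      simp only [hε]
      rw [abs_mul, habs, habs, one_mul]
    · rw [hsqrt]
      have hL : ∀ i : Fin (d + 1), |cubeLagrange d H x i| = (m : ℝ) / ((d : ℝ) + 1) := by
        intro i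
        obtain ⟨p, rfl⟩ := eqv.surjective i
        unfold cubeLagrange
        rw [hval, hε, abs_mul, abs_mul, abs_mul, habs, habs]
        rw [abs_of_nonneg (by positivity : (0:ℝ) ≤ 1 / ((d : ℝ) + 1)),
          abs_of_nonneg (by positivity : (0:ℝ) ≤ (m : ℝ))]
        ring
      rw [Finset.sum_congr rfl fun i _ => hL i]
      rw [Finset.sum_const, Finset.card_univ, Fintype.card_fin, nsmul_eq_mul]
      push_cast
      field_simp
  · -- upper bound
    rintro t ⟨x', hxb, rfl⟩
    rw [hsqrt]
    have hcb : ∀ j, ((Fin.cons 1 x' : Fin (d + 1) → ℝ) j) ^ 2 ≤ 1 := by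
      intro j
      refine Fin.cases ?_ (fun k => ?_) j
      · simp
      · rw [Fin.cons_succ]
        nlinarith [hxb k, abs_nonneg (x' k), sq_abs (x' k)]
    have hsum_c : ∑ j, ((Fin.cons 1 x' : Fin (d + 1) → ℝ) j) ^ 2 ≤ ((d : ℝ) + 1) := by
      calc ∑ j, ((Fin.cons 1 x' : Fin (d + 1) → ℝ) j) ^ 2
          ≤ ∑ _j : Fin (d + 1), (1 : ℝ) := Finset.sum_le_sum fun j _ => hcb j
        _ = (d : ℝ) + 1 := by simp
    set v : Fin (d + 1) → ℝ :=
      fun i => ∑ j, (Fin.cons 1 x' : Fin (d + 1) → ℝ) j * H i j with hv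
    have hCS : (∑ i, |v i|) ^ 2 ≤ ((d : ℝ) + 1) * ∑ i, (v i) ^ 2 := by
      have h := sq_sum_le_card_mul_sum_sq (s := (Finset.univ : Finset (Fin (d + 1))))
        (f := fun i => |v i|)
      simpa [sq_abs] using h
    have hV : ∑ i, (v i) ^ 2 ≤ ((d : ℝ) + 1) * ((d : ℝ) + 1) := by
      rw [hv]
      calc ∑ i, (∑ j, (Fin.cons 1 x' : Fin (d + 1) → ℝ) j * H i j) ^ 2
          = ((d : ℝ) + 1) * ∑ j, ((Fin.cons 1 x' : Fin (d + 1) → ℝ) j) ^ 2 := hsumsq _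
        _ ≤ ((d : ℝ) + 1) * ((d : ℝ) + 1) :=
          mul_le_mul_of_nonneg_left hsum_c (by positivity)
    have hnonneg : 0 ≤ ∑ i, |v i| := Finset.sum_nonneg fun i _ => abs_nonneg _
    have hfin : ∑ i, |v i| ≤ ((d : ℝ) + 1) * m := by
      have h2 : (∑ i, |v i|) ^ 2 ≤ (((d : ℝ) + 1) * m) ^ 2 := by
        calc (∑ i, |v i|) ^ 2 ≤ ((d : ℝ) + 1) * (((d : ℝ) + 1) * ((d : ℝ) + 1)) :=
              le_trans hCS (mul_le_mul_of_nonneg_left hV (by positivity))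
          _ = (((d : ℝ) + 1) * m) ^ 2 := by rw [hnm]; ring
      nlinarith [h2, hnonneg, (show (0:ℝ) ≤ ((d : ℝ) + 1) * m by positivity)]
    have hrw : ∑ j, |cubeLagrange d H x' j| = (1 / ((d : ℝ) + 1)) * ∑ i, |v i| := by
      rw [Finset.mul_sum]
      refine Finset.sum_congr rfl fun i _ => ?_
      unfold cubeLagrange
      rw [abs_mul, abs_of_nonneg (by positivity : (0:ℝ) ≤ 1 / ((d : ℝ) + 1))]
    rw [hrw]
    calc (1 / ((d : ℝ) + 1)) * ∑ i, |v i|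
        ≤ (1 / ((d : ℝ) + 1)) * (((d : ℝ) + 1) * m) :=
          mul_le_mul_of_nonneg_left hfin (by positivity)
      _ = (m : ℝ) := by field_simp
end
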